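/- Let G be a fuzzy graph of order p such that both G and its complement Ḡ are non-trivial. Then 2(μ_min(G) + μ_min(Ḡ)) ≤ γ_snR(G) + γ_snR(Ḡ) < 2p. -/

import Mathlib

noncomputable section
open scoped Classical
open Finset

/-- A fuzzy graph on a vertex set `V`. -/
structure FuzzyGraph (V : Type*) where
  σ : V → ℝ
  μ : V → V → ℝ
  σ_nonneg : ∀ v, 0 ≤ σ v
  σ_le_one : ∀ v, σ v ≤ 1
  μ_nonneg : ∀ u v, 0 ≤ μ u v
  μ_symm : ∀ u v, μ u v = μ v u
  μ_le : ∀ u v, μ u v ≤ min (σ u) (σ v)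
  μ_irrefl : ∀ v, μ v v = 0

namespace FuzzyGraph

variable {V : Type*} (G : FuzzyGraph V)

/-- The strength of a walk (given as its list of vertices): the minimum
membership value of its edges (1 for walks without edges). -/
def walkStrength (l : List V) : ℝ :=
  ((l.zip l.tail).map fun p => G.μ p.1 p.2).foldr min 1

/-- `l` is a `u`–`v` walk: it starts at `u`, ends at `v`, and consecutive
vertices are joined by edges of positive membership. -/
def IsWalk (u v : V) (l : List V) : Prop :=
  l.head? = some u ∧ l.getLast? = some v ∧ l.Chain' (fun a b => 0 < G.μ a b)

/-- `CONN_G(u,v)`: the maximum strength over all `u`–`v` paths. -/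
def conn (u v : V) : ℝ :=
  sSup {s | ∃ l : List V, G.IsWalk u v l ∧ 2 ≤ l.length ∧ s = G.walkStrength l}

/-- The edge `(u,v)` is strong. -/
def StrongEdge (u v : V) : Prop :=
  0 < G.μ u v ∧ G.μ u v = G.conn u v

/-- `μ_s(u)`: the minimum membership value among strong edges at `u`
(`0` if `u` has no strong neighbor, via `Real.sInf_empty`). -/
def mus (u : V) : ℝ :=
  sInf {x | ∃ v, G.StrongEdge u v ∧ x = G.μ u v}

/-- The strong neighborhood degree `d_SN(v)`. -/
def dSN [Fintype V] (v : V) : ℝ :=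
  ∑ u ∈ Finset.univ.filter (fun u => G.StrongEdge v u), G.σ u

/-- `D` is a strong dominating set. -/
def IsStrongDomSet (D : Finset V) : Prop :=
  ∀ v, v ∉ D → ∃ u ∈ D, G.StrongEdge v u

/-- The weight of a strong dominating set. -/
def domWeight (D : Finset V) : ℝ := ∑ u ∈ D, G.mus u

/-- The strong domination number `γ_s(G)`. -/
def gammaS [Fintype V] : ℝ :=
  sInf {w | ∃ D : Finset V, G.IsStrongDomSet D ∧ w = G.domWeight D}

/-- `f` is a strong-neighbors Roman dominating function (SNRDF). -/
def IsSNRDF (f : V → ℕ) : Prop :=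
  (∀ v, f v ≤ 2) ∧ ∀ v, f v = 0 → ∃ u, G.StrongEdge v u ∧ f u = 2

/-- The weight of an SNRDF. -/
def snrdfWeight [Fintype V] (f : V → ℕ) : ℝ := ∑ v, (f v : ℝ) * G.mus v

/-- The strong-neighbors Roman domination number `γ_snR(G)`. -/
def gammaSnR [Fintype V] : ℝ :=
  sInf {w | ∃ f : V → ℕ, G.IsSNRDF f ∧ w = G.snrdfWeight f}

/-- The fuzzy subgraph induced by the vertices satisfying `p`. -/
def induce (p : V → Prop) : FuzzyGraph {v // p v} where
  σ v := G.σ v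
  μ u v := G.μ u v
  σ_nonneg v := G.σ_nonneg v
  σ_le_one v := G.σ_le_one v
  μ_nonneg u v := G.μ_nonneg u v
  μ_symm u v := G.μ_symm u v
  μ_le u v := G.μ_le u v
  μ_irrefl v := G.μ_irrefl v

/-- The minimum membership value among the strong edges of `G`. -/
def muMin : ℝ := sInf {x | ∃ u v, G.StrongEdge u v ∧ x = G.μ u v}

/-- The complement of a fuzzy graph. -/
def compl : FuzzyGraph V where
  σ := G.σ
  μ u v := if u = v then 0 else min (G.σ u) (G.σ v) - G.μ u v
  σ_nonneg := G.σ_nonneg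
  σ_le_one := G.σ_le_one
  μ_nonneg u v := by
    by_cases h : u = v
    · simp [h]
    · simp only [if_neg h, sub_nonneg]
      exact G.μ_le u v
  μ_symm u v := by
    by_cases h : u = v
    · simp [h]
    · have h' : ¬ v = u := fun hh => h hh.symm
      simp only [if_neg h, if_neg h', min_comm (G.σ u), G.μ_symm u v]
  μ_le u v := by
    by_cases h : u = v
    · subst h
      simp only [if_pos rfl, le_min_iff]
      exact ⟨G.σ_nonneg u, G.σ_nonneg u⟩
    · simp only [if_neg h]
      have := G.μ_nonneg u v
      linarith
  μ_irrefl v := by simp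

end FuzzyGraph

/-!
Lower bound: an SNRDF either takes the value `2` at a strong neighbour `u` of some vertex, costing
at least `2 μ_s(u) ≥ 2 μ_min`, or is at least `1` at both ends of a strong edge (and if there is no
strong edge, `μ_min = 0`).

Upper bound: the constant SNRDF `1` gives `γ_snR ≤ Σ μ_s ≤ p`. Equality forces `μ_s = σ` and unique
strong neighbours, since a vertex `v` with two strong neighbours yields an SNRDF of weight
`p - σ(v)`. When strong neighbours are unique every edge is strong, so `G` consists of disjoint
effective edges and vertices with `σ = 0`. If `G` and `Ḡ` both had this shape, take `a` with
`σ(a) > 0` and its partners `u` in `G` and `w` in `Ḡ`: then `uw` is not an edge of `G`, so it is an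
effective edge of `Ḡ`, and `w` has the two partners `a` and `u` in `Ḡ`.
-/

theorem List.zipWith_dropLast_self_tail {α β : Type*} (f : α → α → β) :
    ∀ l : List α, l.dropLast.zipWith f l.tail = l.zipWith f l.tail
  | [] | [_] => rfl
  | a :: b :: t => by
    simp only [List.tail_cons, List.dropLast_cons_cons, List.zipWith_cons_cons]
    exact congrArg _ (List.zipWith_dropLast_self_tail f (b :: t))

namespace FuzzyGraph

variable {V : Type*} {G : FuzzyGraph V}

lemma mu_le_sigma_left (G : FuzzyGraph V) (u v : V) : G.μ u v ≤ G.σ u :=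
  (G.μ_le u v).trans (min_le_left _ _)

lemma mu_le_sigma_right (G : FuzzyGraph V) (u v : V) : G.μ u v ≤ G.σ v :=
  (G.μ_le u v).trans (min_le_right _ _)

lemma compl_mu_of_ne (G : FuzzyGraph V) {u v : V} (h : u ≠ v) :
    G.compl.μ u v = min (G.σ u) (G.σ v) - G.μ u v :=
  if_neg h

lemma walkStrength_cons_cons (G : FuzzyGraph V) (a b : V) (l : List V) :
    G.walkStrength (a :: b :: l) = min (G.μ a b) (G.walkStrength (b :: l)) := rfl

lemma walkStrength_le_one (G : FuzzyGraph V) (l : List V) : G.walkStrength l ≤ 1 := by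
  unfold walkStrength
  induction (l.zip l.tail).map fun p => G.μ p.1 p.2 with
  | nil => exact le_rfl
  | cons a t ih => exact (min_le_right _ _).trans ih

lemma walkStrength_pair (G : FuzzyGraph V) (a b : V) : G.walkStrength [a, b] = G.μ a b :=
  min_eq_left ((G.mu_le_sigma_left a b).trans (G.σ_le_one a))

lemma walkStrength_reverse (G : FuzzyGraph V) (l : List V) :
    G.walkStrength l.reverse = G.walkStrength l := by
  simp only [walkStrength, List.map_zip_eq_zipWith]
  rw [← List.zipWith_dropLast_self_tail, ← List.zipWith_dropLast_self_tail (l := l),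
    List.zipWith_comm, List.dropLast_reverse, List.tail_reverse,
    ← List.reverse_zipWith (by simp), (List.reverse_perm _).foldr_eq]
  congr 2
  funext a b
  exact G.μ_symm b a

lemma IsWalk.reverse {u v : V} {l : List V} (h : G.IsWalk u v l) : G.IsWalk v u l.reverse := by
  obtain ⟨hu, hv, hchain⟩ := h
  refine ⟨by rwa [List.head?_reverse], by rwa [List.getLast?_reverse], ?_⟩
  exact List.isChain_reverse.2 (hchain.imp fun a b hab => by rwa [G.μ_symm])

lemma conn_symm (G : FuzzyGraph V) (u v : V) : G.conn u v = G.conn v u := by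
  have reverse_mem : ∀ u v : V,
      {s | ∃ l : List V, G.IsWalk u v l ∧ 2 ≤ l.length ∧ s = G.walkStrength l} ⊆
        {s | ∃ l : List V, G.IsWalk v u l ∧ 2 ≤ l.length ∧ s = G.walkStrength l} := by
    rintro u v s ⟨l, hw, hl, rfl⟩
    exact ⟨l.reverse, hw.reverse, by rwa [List.length_reverse], (G.walkStrength_reverse l).symm⟩
  exact congrArg sSup ((reverse_mem u v).antisymm (reverse_mem v u))

lemma StrongEdge.symm {u v : V} (h : G.StrongEdge u v) : G.StrongEdge v u := by
  rw [StrongEdge, G.μ_symm, G.conn_symm]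
  exact h

lemma StrongEdge.ne {u v : V} (h : G.StrongEdge u v) : u ≠ v := by
  rintro rfl
  exact (G.μ_irrefl u ▸ h.1).false

lemma mu_le_conn {u v : V} (h : 0 < G.μ u v) : G.μ u v ≤ G.conn u v :=
  le_csSup ⟨1, by rintro s ⟨l, -, -, rfl⟩; exact G.walkStrength_le_one l⟩
    ⟨[u, v], ⟨rfl, rfl, List.isChain_pair.2 h⟩, le_rfl, (G.walkStrength_pair u v).symm⟩

lemma conn_le {u v : V} (h : 0 < G.μ u v) {c : ℝ}
    (hc : ∀ l : List V, G.IsWalk u v l → 2 ≤ l.length → G.walkStrength l ≤ c) :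
    G.conn u v ≤ c :=
  csSup_le ⟨_, [u, v], ⟨rfl, rfl, List.isChain_pair.2 h⟩, le_rfl, rfl⟩
    (by rintro s ⟨l, hw, hl, rfl⟩; exact hc l hw hl)

/-- A walk that leaves a set closed under strong edges must use a non-strong edge. -/
lemma walkStrength_le_of_strongClosed {S : Set V}
    (hS : ∀ x y, x ∈ S → G.StrongEdge x y → y ∈ S) {c : ℝ}
    (hc : ∀ x y, 0 < G.μ x y → ¬ G.StrongEdge x y → G.μ x y ≤ c) {q : V} (hq : q ∉ S) :
    ∀ (l : List V) (x : V), G.IsWalk x q l → x ∈ S → G.walkStrength l ≤ c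
  | [], _, ⟨h, _, _⟩, _ => by simp at h
  | [_], _, ⟨hx, hq', _⟩, hxS => by
    simp only [List.head?_cons, List.getLast?_singleton, Option.some.injEq] at hx hq'
    exact absurd (hq' ▸ hx ▸ hxS) hq
  | a :: b :: t, x, ⟨hx, hlast, hchain⟩, hxS => by
    simp only [List.head?_cons, Option.some.injEq] at hx
    subst hx
    rw [walkStrength_cons_cons]
    by_cases hab : G.StrongEdge a b
    · have hwalk : G.IsWalk b q (b :: t) :=
        ⟨rfl, by rwa [List.getLast?_cons_cons] at hlast, hchain.tail⟩
      exact (min_le_right _ _).trans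
        (walkStrength_le_of_strongClosed hS hc hq _ _ hwalk (hS a b hxS hab))
    · exact (min_le_left _ _).trans (hc a b (List.isChain_cons_cons.1 hchain).1 hab)

def StrongNeighborUnique (G : FuzzyGraph V) : Prop :=
  ∀ ⦃v u₁ u₂ : V⦄, G.StrongEdge v u₁ → G.StrongEdge v u₂ → u₁ = u₂

/-- A strongest non-strong edge `pq` would be strong after all: a `p`–`q` walk leaves
`{p, partner of p}` through a non-strong edge, so it is no stronger than `pq`. -/
lemma StrongNeighborUnique.strongEdge [Finite V] (hG : G.StrongNeighborUnique) {u v : V}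
    (h : 0 < G.μ u v) : G.StrongEdge u v := by
  by_contra hnot
  obtain ⟨⟨p, q⟩, ⟨hpq, hpqn⟩, hmax⟩ :=
    Set.exists_max_image {e : V × V | 0 < G.μ e.1 e.2 ∧ ¬ G.StrongEdge e.1 e.2}
      (fun e => G.μ e.1 e.2) (Set.toFinite _) ⟨(u, v), h, hnot⟩
  let S : Set V := {x | x = p ∨ G.StrongEdge p x}
  have hS : ∀ x y, x ∈ S → G.StrongEdge x y → y ∈ S := by
    rintro x y (rfl | hpx) hxy
    · exact Or.inr hxy
    · exact Or.inl (hG hxy hpx.symm)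
  have hq : q ∉ S := by
    rintro (rfl | hs)
    · exact (G.μ_irrefl q ▸ hpq).false
    · exact hpqn hs
  refine hpqn ⟨hpq, (G.mu_le_conn hpq).antisymm (G.conn_le hpq fun l hw _ => ?_)⟩
  exact walkStrength_le_of_strongClosed hS (fun x y hxy hn => hmax (x, y) ⟨hxy, hn⟩) hq l p hw
    (Or.inl rfl)

lemma mus_nonneg (v : V) : 0 ≤ G.mus v :=
  Real.sInf_nonneg (by rintro x ⟨u, -, rfl⟩; exact G.μ_nonneg v u)

lemma mus_le {v u : V} (h : G.StrongEdge v u) : G.mus v ≤ G.μ v u :=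
  csInf_le ⟨0, by rintro x ⟨w, -, rfl⟩; exact G.μ_nonneg v w⟩ ⟨u, h, rfl⟩

lemma exists_strongEdge_of_mus_pos {v : V} (h : 0 < G.mus v) : ∃ u, G.StrongEdge v u := by
  by_contra! hno
  have hempty : {x | ∃ u, G.StrongEdge v u ∧ x = G.μ v u} = ∅ :=
    Set.eq_empty_of_forall_notMem fun x ⟨u, hu, _⟩ => hno u hu
  rw [mus, hempty, Real.sInf_empty] at h
  exact h.false

lemma mus_le_sigma (v : V) : G.mus v ≤ G.σ v := by
  rcases (G.mus_nonneg v).eq_or_lt with h | h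
  · exact h ▸ G.σ_nonneg v
  · obtain ⟨u, hu⟩ := exists_strongEdge_of_mus_pos h
    exact (mus_le hu).trans (G.mu_le_sigma_left v u)

lemma StrongEdge.mu_eq_sigma (he : ∀ v, G.mus v = G.σ v) {v u : V} (h : G.StrongEdge v u) :
    G.μ v u = G.σ v ∧ G.σ u = G.σ v := by
  have hvu : G.μ v u = G.σ v := (G.mu_le_sigma_left v u).antisymm (he v ▸ mus_le h)
  refine ⟨hvu, le_antisymm ?_ (hvu ▸ G.mu_le_sigma_right v u)⟩
  simpa [he u, G.μ_symm u v, hvu] using mus_le h.symm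

lemma muMin_le_mus {v u : V} (h : G.StrongEdge v u) : G.muMin ≤ G.mus v :=
  csInf_le_csInf ⟨0, by rintro x ⟨a, b, -, rfl⟩; exact G.μ_nonneg a b⟩ ⟨G.μ v u, u, h, rfl⟩
    (by rintro x ⟨w, hw, rfl⟩; exact ⟨v, w, hw, rfl⟩)

lemma muMin_eq_zero_of_forall_not_strongEdge (h : ∀ u v, ¬ G.StrongEdge u v) : G.muMin = 0 := by
  have hempty : {x | ∃ u v, G.StrongEdge u v ∧ x = G.μ u v} = ∅ :=
    Set.eq_empty_of_forall_notMem fun x ⟨u, v, huv, _⟩ => h u v huv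
  rw [muMin, hempty, Real.sInf_empty]

lemma isSNRDF_one : G.IsSNRDF 1 :=
  ⟨fun _ => one_le_two, fun _ h => absurd h one_ne_zero⟩

section Roman

variable [Fintype V]

lemma sum_le_snrdfWeight (f : V → ℕ) (s : Finset V) :
    ∑ x ∈ s, (f x : ℝ) * G.mus x ≤ G.snrdfWeight f :=
  sum_le_sum_of_subset_of_nonneg (subset_univ s) fun x _ _ =>
    mul_nonneg (Nat.cast_nonneg _) (G.mus_nonneg x)

lemma snrdfWeight_nonneg (f : V → ℕ) : 0 ≤ G.snrdfWeight f := by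
  simpa using G.sum_le_snrdfWeight f ∅

lemma gammaSnR_le {f : V → ℕ} (hf : G.IsSNRDF f) : G.gammaSnR ≤ G.snrdfWeight f :=
  csInf_le ⟨0, by rintro w ⟨g, -, rfl⟩; exact G.snrdfWeight_nonneg g⟩ ⟨f, hf, rfl⟩

lemma le_gammaSnR {c : ℝ} (h : ∀ f : V → ℕ, G.IsSNRDF f → c ≤ G.snrdfWeight f) :
    c ≤ G.gammaSnR :=
  le_csInf ⟨_, 1, G.isSNRDF_one, rfl⟩ (by rintro w ⟨f, hf, rfl⟩; exact h f hf)

lemma gammaSnR_le_sum_mus : G.gammaSnR ≤ ∑ v, G.mus v := by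
  simpa [snrdfWeight] using G.gammaSnR_le G.isSNRDF_one

lemma gammaSnR_le_sum_sigma : G.gammaSnR ≤ ∑ v, G.σ v :=
  G.gammaSnR_le_sum_mus.trans (sum_le_sum fun v _ => G.mus_le_sigma v)

lemma two_muMin_le_snrdfWeight {f : V → ℕ} (hf : G.IsSNRDF f) :
    2 * G.muMin ≤ G.snrdfWeight f := by
  by_cases h0 : ∃ v, f v = 0
  · obtain ⟨v, hv⟩ := h0
    obtain ⟨u, hvu, hu⟩ := hf.2 v hv
    have hweight := G.sum_le_snrdfWeight f {u}
    rw [sum_singleton, hu, Nat.cast_ofNat] at hweight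
    linarith [muMin_le_mus hvu.symm]
  by_cases hs : ∃ a b, G.StrongEdge a b
  · obtain ⟨a, b, hab⟩ := hs
    have hweight := G.sum_le_snrdfWeight f {a, b}
    rw [sum_pair hab.ne] at hweight
    have hpos : ∀ x, (1 : ℝ) ≤ f x := fun x => by
      exact_mod_cast Nat.one_le_iff_ne_zero.2 fun hx => h0 ⟨x, hx⟩
    nlinarith [muMin_le_mus hab, muMin_le_mus hab.symm, G.mus_nonneg a, G.mus_nonneg b,
      hpos a, hpos b]
  · simp only [not_exists] at hs
    rw [muMin_eq_zero_of_forall_not_strongEdge hs, mul_zero]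
    exact G.snrdfWeight_nonneg f

lemma two_muMin_le_gammaSnR : 2 * G.muMin ≤ G.gammaSnR :=
  le_gammaSnR fun _ hf => two_muMin_le_snrdfWeight hf

/-- Give weight `2` to `v` and `0` to two of its strong neighbours `u₁, u₂`. -/
lemma gammaSnR_le_sum_sigma_sub (he : ∀ v, G.mus v = G.σ v) {v u₁ u₂ : V} (h12 : u₁ ≠ u₂)
    (h1 : G.StrongEdge v u₁) (h2 : G.StrongEdge v u₂) :
    G.gammaSnR ≤ ∑ x, G.σ x - G.σ v := by
  set f : V → ℕ := fun x => if x = v then 2 else if x = u₁ ∨ x = u₂ then 0 else 1 with hf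
  have hroman : G.IsSNRDF f := by
    refine ⟨fun x => by simp only [hf]; split_ifs <;> omega, fun x hx => ?_⟩
    have hfv : f v = 2 := if_pos rfl
    simp only [hf] at hx
    split_ifs at hx with hxv hxu
    rcases hxu with rfl | rfl
    · exact ⟨v, h1.symm, hfv⟩
    · exact ⟨v, h2.symm, hfv⟩
  have hterm : ∀ x, (f x : ℝ) * G.mus x = G.σ x + (if x = v then G.σ x else 0)
      - (if x = u₁ then G.σ x else 0) - (if x = u₂ then G.σ x else 0) := by
    intro x
    have hv₁ := h1.ne
    have hv₂ := h2.ne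
    rw [he x]
    simp only [hf]
    split_ifs <;> subst_vars <;> simp_all [two_mul]
  calc G.gammaSnR ≤ G.snrdfWeight f := G.gammaSnR_le hroman
    _ = ∑ x, G.σ x + G.σ v - G.σ u₁ - G.σ u₂ := by
      simp only [snrdfWeight, hterm, sum_sub_distrib, sum_add_distrib, sum_ite_eq', mem_univ,
        if_true]
    _ = ∑ x, G.σ x - G.σ v := by
      rw [(h1.mu_eq_sigma he).2, (h2.mu_eq_sigma he).2]
      ring

/-- The shape forced by `γ_snR = p`: disjoint effective edges (`μ = σ` at both ends) plus
isolated vertices, which must have `σ = 0` since their `μ_s` is `0`. -/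
def IsSNRExtremal (G : FuzzyGraph V) : Prop :=
  (∀ v, G.mus v = G.σ v) ∧ G.StrongNeighborUnique

lemma isSNRExtremal_of_sum_sigma_le_gammaSnR (h : ∑ v, G.σ v ≤ G.gammaSnR) :
    G.IsSNRExtremal := by
  have hmus : ∀ v, G.mus v = G.σ v := fun v =>
    (sum_eq_sum_iff_of_le fun v _ => G.mus_le_sigma v).1
      ((sum_le_sum fun v _ => G.mus_le_sigma v).antisymm (h.trans G.gammaSnR_le_sum_mus))
      v (mem_univ v)
  refine ⟨hmus, fun v u₁ u₂ h1 h2 => by_contra fun h12 => ?_⟩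
  have hσv : 0 < G.σ v := h1.1.trans_le (G.mu_le_sigma_left v u₁)
  linarith [G.gammaSnR_le_sum_sigma_sub hmus h12 h1 h2]

end Roman

lemma IsSNRExtremal.not_compl [Finite V] (hG : G.IsSNRExtremal) {a : V} (ha : 0 < G.σ a) :
    ¬ G.compl.IsSNRExtremal := by
  rintro ⟨hmus', huniq'⟩
  obtain ⟨hmus, huniq⟩ := hG
  obtain ⟨u, hau⟩ := exists_strongEdge_of_mus_pos (hmus a ▸ ha)
  obtain ⟨w, haw⟩ := exists_strongEdge_of_mus_pos (show 0 < G.compl.mus a from hmus' a ▸ ha)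
  obtain ⟨hμau, hσu⟩ := hau.mu_eq_sigma hmus
  obtain ⟨hμaw, hσw⟩ := haw.mu_eq_sigma hmus'
  change G.σ w = G.σ a at hσw
  have hμaw₀ : G.μ a w = 0 := by
    rw [compl_mu_of_ne G haw.ne, hσw, min_self] at hμaw
    change _ = G.σ a at hμaw
    linarith
  have huw : u ≠ w := by
    rintro rfl
    linarith
  have hμuw₀ : G.μ u w = 0 := by
    by_contra hne
    exact haw.ne (huniq (huniq.strongEdge ((G.μ_nonneg u w).lt_of_ne' hne)) hau.symm).symm
  have hμwu : 0 < G.compl.μ w u := by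
    rwa [compl_mu_of_ne G huw.symm, G.μ_symm, hμuw₀, hσu, hσw, min_self, sub_zero]
  exact hau.ne (huniq' (huniq'.strongEdge hμwu) haw.symm).symm

end FuzzyGraph

theorem nordhaus_gaddum_gammaSnR_general {V : Type*} [Fintype V]
    (G : FuzzyGraph V)
    (hG : ∃ u v : V, 0 < G.μ u v) :
    2 * (G.muMin + G.compl.muMin) ≤ G.gammaSnR + G.compl.gammaSnR ∧
      G.gammaSnR + G.compl.gammaSnR < 2 * ∑ v : V, G.σ v := by
  refine ⟨by linarith [G.two_muMin_le_gammaSnR, G.compl.two_muMin_le_gammaSnR], ?_⟩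
  obtain ⟨a, b, hab⟩ := hG
  have hσa : 0 < G.σ a := hab.trans_le (G.mu_le_sigma_left a b)
  have hle : G.gammaSnR ≤ ∑ v, G.σ v := G.gammaSnR_le_sum_sigma
  have hle' : G.compl.gammaSnR ≤ ∑ v, G.σ v := G.compl.gammaSnR_le_sum_sigma
  by_contra! hsum
  have hext : G.IsSNRExtremal := G.isSNRExtremal_of_sum_sigma_le_gammaSnR (by linarith)
  have hext' : G.compl.IsSNRExtremal :=
    G.compl.isSNRExtremal_of_sum_sigma_le_gammaSnR (show ∑ v, G.σ v ≤ _ by linarith)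
  exact hext.not_compl hσa hext'

/-- Nordhaus–Gaddum-type inequalities for `γ_snR`. -/
theorem nordhaus_gaddum_gammaSnR {V : Type*} [Fintype V]
    (G : FuzzyGraph V)
    (hG : ∃ u v : V, 0 < G.μ u v)
    (hGc : ∃ u v : V, 0 < G.compl.μ u v) :
    2 * (G.muMin + G.compl.muMin) ≤ G.gammaSnR + G.compl.gammaSnR ∧
      G.gammaSnR + G.compl.gammaSnR < 2 * ∑ v : V, G.σ v :=
  nordhaus_gaddum_gammaSnR_general G hG
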